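/- Define the map c on steps by c(E) = N, c(N) = E, c(W) = S, c(S) = W, extended letterwise to lists. For any vertical path V and horizontal path H, the map σ ↦ c(σ) is a bijection from the set of shuffles of V and H onto the set of shuffles of c(H) and c(V), and for every shuffle σ of V and H, the signed peak-count of c(σ) equals the negative of the signed peak-count of σ. -/
import Mathlib


inductive Step : Type
  | E | W | N | S
deriving DecidableEq, Repr

open Step

/-- A step is vertical (North or South). -/
def isVert : Step → Bool
  | N => true
  | S => true
  | _ => false

/-- A step is horizontal (East or West). -/
def isHoriz : Step → Bool
  | E => true
  | W => true
  | _ => false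

/-- `σ` is a shuffle (interleaving) of the vertical path `V` and horizontal path `H`:
its subsequence of vertical steps is `V` and its subsequence of horizontal steps is `H`. -/
def IsShuffle (V H σ : List Step) : Prop :=
  σ.filter isVert = V ∧ σ.filter isHoriz = H

/-- The list of adjacent pairs `(σ_i, σ_{i+1})` of a list. -/
def pairs (σ : List Step) : List (Step × Step) := σ.zip σ.tail

/-- Signed peak-count: (# of (N,W) adjacent pairs) − (# of (E,S) adjacent pairs). -/
def signedPeak (σ : List Step) : ℤ :=
  (((pairs σ).filter (fun p => decide (p.1 = N ∧ p.2 = W))).length : ℤ)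
  - (((pairs σ).filter (fun p => decide (p.1 = E ∧ p.2 = S))).length : ℤ)

/-- Peak-count: (# of (N,W) adjacent pairs) + (# of (E,S) adjacent pairs). -/
def peakCount (σ : List Step) : ℕ :=
  ((pairs σ).filter (fun p => decide (p.1 = N ∧ p.2 = W))).length
  + ((pairs σ).filter (fun p => decide (p.1 = E ∧ p.2 = S))).length

/-- Binomial coefficient with integer arguments, equal to 0 unless `0 ≤ b ≤ a`. -/
def zch (a b : ℤ) : ℕ := if 0 ≤ b ∧ b ≤ a then a.toNat.choose b.toNat else 0

/-- The complementation map on steps: `E ↦ N`, `N ↦ E`, `W ↦ S`, `S ↦ W`. -/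
def compStep : Step → Step
  | Step.E => Step.N
  | Step.N => Step.E
  | Step.W => Step.S
  | Step.S => Step.W


lemma compStep_compStep (s : Step) : compStep (compStep s) = s := by cases s <;> rfl

lemma map_comp_involutive : Function.Involutive (List.map compStep) := by
  intro l; rw [List.map_map]; simp [Function.comp_def, compStep_compStep]

lemma filter_vert_map (l : List Step) :
    (l.map compStep).filter isVert = (l.filter isHoriz).map compStep := by
  induction l with
  | nil => rfl
  | cons a t ih => cases a <;> simp [List.filter, compStep, isVert, isHoriz, ih]

lemma filter_horiz_map (l : List Step) :
    (l.map compStep).filter isHoriz = (l.filter isVert).map compStep := by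
  induction l with
  | nil => rfl
  | cons a t ih => cases a <;> simp [List.filter, compStep, isVert, isHoriz, ih]

lemma shuffle_comp {V H σ : List Step} (h : IsShuffle V H σ) :
    IsShuffle (H.map compStep) (V.map compStep) (σ.map compStep) := by
  obtain ⟨h1, h2⟩ := h
  exact ⟨by rw [filter_vert_map, h2], by rw [filter_horiz_map, h1]⟩

lemma pairs_map (σ : List Step) :
    pairs (σ.map compStep) = (pairs σ).map (Prod.map compStep compStep) := by
  unfold pairs
  rw [← List.map_tail, List.zip_map]

lemma signedPeak_comp (σ : List Step) :
    signedPeak (σ.map compStep) = - signedPeak σ := by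
  unfold signedPeak
  rw [pairs_map]
  have h1 : ((pairs σ).map (Prod.map compStep compStep)).filter
      (fun p => decide (p.1 = N ∧ p.2 = W))
      = ((pairs σ).filter (fun p => decide (p.1 = E ∧ p.2 = S))).map
        (Prod.map compStep compStep) := by
    rw [List.filter_map]
    congr 1
    apply List.filter_congr
    intro p _
    cases p with
    | mk a b => cases a <;> cases b <;> rfl
  have h2 : ((pairs σ).map (Prod.map compStep compStep)).filter
      (fun p => decide (p.1 = E ∧ p.2 = S))
      = ((pairs σ).filter (fun p => decide (p.1 = N ∧ p.2 = W))).map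
        (Prod.map compStep compStep) := by
    rw [List.filter_map]
    congr 1
    apply List.filter_congr
    intro p _
    cases p with
    | mk a b => cases a <;> cases b <;> rfl
  rw [h1, h2, List.length_map, List.length_map]
  ring

/-- **Lemma (complementation negates signed peak-count).**
For a vertical path `V` and horizontal path `H`, letterwise complementation is a bijection
from the shuffles of `V` and `H` onto the shuffles of `c(H)` and `c(V)`, and it negates
the signed peak-count. -/
theorem compStep_bijOn_neg_signedPeak (V H : List Step)
    (hV : ∀ s ∈ V, isVert s = true)
    (hH : ∀ s ∈ H, isHoriz s = true) :
    Set.BijOn (List.map compStep)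
        {σ : List Step | IsShuffle V H σ}
        {σ : List Step | IsShuffle (H.map compStep) (V.map compStep) σ}
    ∧ (∀ σ : List Step, IsShuffle V H σ →
        signedPeak (σ.map compStep) = - signedPeak σ) := by
  constructor
  · refine ⟨fun σ hσ => shuffle_comp hσ, ?_, ?_⟩
    · intro a _ b _ hab
      have := congrArg (List.map compStep) hab
      rwa [map_comp_involutive a, map_comp_involutive b] at this
    · intro τ hτ
      refine ⟨τ.map compStep, ?_, map_comp_involutive τ⟩
      obtain ⟨h1, h2⟩ := hτ
      constructor
      · rw [filter_vert_map, h2, map_comp_involutive V]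
      · rw [filter_horiz_map, h1, map_comp_involutive H]
  · intro σ _; exact signedPeak_comp σ
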